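/- For every real ν ≥ 1 and every real z > 0, one has K_ν(z) > (Γ(ν)/2)·e^{−z}·(2/z)^ν, where Γ denotes the real Gamma function. -/

import Mathlib

open Real MeasureTheory

/-- Modified Bessel function of the second kind, via its integral representation. -/
noncomputable def besselK (ν z : ℝ) : ℝ :=
  ∫ t in Set.Ioi (0 : ℝ), Real.exp (-z * Real.cosh t) * Real.cosh (ν * t)

/-! Substituting `x = z (cosh t - 1)` in Euler's integral for `Γ(ν)` gives
`Γ(ν)/2 · e^{-z} (2/z)^ν = ∫₀^∞ e^{-z cosh t} (2 (cosh t - 1))^{ν-1} sinh t dt`,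
so it suffices to compare integrands. For `ν ≥ 1` and `t ≥ 0`, the bounds `2 (cosh t - 1) ≤ e^t` and `sinh t < e^t / 2`
give `(2 (cosh t - 1))^{ν-1} sinh t < e^{νt} / 2 < cosh (νt)`. -/

open Set

namespace MeasureTheory

theorem setIntegral_lt_setIntegral_of_forall_lt {X : Type*} [MeasurableSpace X] {μ : Measure X}
    {s : Set X} {f g : X → ℝ} (hs : MeasurableSet s) (hμs : μ s ≠ 0)
    (hf : IntegrableOn f s μ) (hg : IntegrableOn g s μ) (hlt : ∀ x ∈ s, f x < g x) :
    ∫ x in s, f x ∂μ < ∫ x in s, g x ∂μ := by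
  rw [← sub_pos, ← integral_sub hg hf,
    setIntegral_pos_iff_support_of_nonneg_ae (f := fun x => g x - f x) _ (hg.sub hf)]
  · exact hμs.bot_lt.trans_le (measure_mono fun x hx => ⟨(sub_pos.2 (hlt x hx)).ne', hx⟩)
  · filter_upwards [ae_restrict_mem hs] with x hx using sub_nonneg.2 (hlt x hx).le

end MeasureTheory

namespace Real

theorem one_add_sq_div_two_le_cosh (t : ℝ) : 1 + t ^ 2 / 2 ≤ cosh t := by
  have key (u : ℝ) (hu : 0 ≤ u) : 1 + (2 * u) ^ 2 / 2 ≤ cosh (2 * u) := by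
    rw [cosh_two_mul, cosh_sq]
    nlinarith [self_le_sinh_iff.2 hu]
  simpa only [mul_div_cancel₀ _ (two_ne_zero (α := ℝ)), sq_abs, cosh_abs] using
    key (|t| / 2) (by positivity)

theorem cosh_le_exp_abs (x : ℝ) : cosh x ≤ exp |x| := by
  rw [← cosh_abs, cosh_eq]
  linarith [exp_le_exp.2 (show -|x| ≤ |x| by linarith [abs_nonneg x])]

theorem image_cosh_sub_one_Ioi : (fun t => cosh t - 1) '' Ioi 0 = Ioi 0 := by
  rw [show (fun t => cosh t - 1) = (· - 1) ∘ cosh from rfl, image_comp,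
    show cosh '' Ioi 0 = Ioi 1 from coshOpenPartialHomeomorph.image_source_eq_target,
    image_sub_const_Ioi, sub_self]

theorem integral_Ioi_sinh_smul_comp_cosh_sub_one {E : Type*} [NormedAddCommGroup E]
    [NormedSpace ℝ E] (g : ℝ → E) :
    ∫ t in Ioi (0 : ℝ), sinh t • g (cosh t - 1) = ∫ x in Ioi (0 : ℝ), g x := by
  have hinj : InjOn (fun t => cosh t - 1) (Ioi 0) := fun a (ha : 0 < a) b (hb : 0 < b) hab =>
    cosh_injOn ha.le hb.le (sub_left_injective hab)
  conv_rhs => rw [← image_cosh_sub_one_Ioi]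
  rw [integral_image_eq_integral_abs_deriv_smul measurableSet_Ioi
    (fun t _ => ((hasDerivAt_cosh t).sub_const 1).hasDerivWithinAt) hinj]
  refine setIntegral_congr_fun measurableSet_Ioi fun t ht => ?_
  rw [abs_of_pos (sinh_pos_iff.2 ht)]

theorem integral_exp_neg_mul_cosh_mul_rpow_mul_sinh {ν z : ℝ} (hν : 0 < ν) (hz : 0 < z) :
    ∫ t in Ioi (0 : ℝ), exp (-z * cosh t) * ((2 * (cosh t - 1)) ^ (ν - 1) * sinh t) =
      Gamma ν / 2 * exp (-z) * (2 / z) ^ ν := by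
  have hsplit (t : ℝ) : exp (-z * cosh t) * ((2 * (cosh t - 1)) ^ (ν - 1) * sinh t) =
      2 ^ (ν - 1) * exp (-z) * (sinh t • ((cosh t - 1) ^ (ν - 1) * exp (-(z * (cosh t - 1))))) := by
    rw [mul_rpow zero_le_two (sub_nonneg.2 (one_le_cosh t)), smul_eq_mul,
      show -z * cosh t = -z + -(z * (cosh t - 1)) by ring, exp_add]
    ring
  simp_rw [hsplit]
  rw [integral_const_mul,
    integral_Ioi_sinh_smul_comp_cosh_sub_one (fun x => x ^ (ν - 1) * exp (-(z * x))),
    integral_rpow_mul_exp_neg_mul_Ioi hν hz, rpow_sub two_pos, rpow_one,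
    show 2 / z = 2 * (1 / z) by ring, mul_rpow zero_le_two (by positivity)]
  ring

theorem integrableOn_exp_neg_mul_cosh_mul_cosh_mul (ν : ℝ) {z : ℝ} (hz : 0 < z) :
    IntegrableOn (fun t => exp (-z * cosh t) * cosh (ν * t)) (Ioi 0) := by
  set a := |ν| + 1
  refine ((exp_neg_integrableOn_Ioi 0 one_pos).const_mul (exp (a ^ 2 / (2 * z)))).mono'
    (by fun_prop) ?_
  filter_upwards [ae_restrict_mem measurableSet_Ioi] with t (ht : 0 < t)
  have hquad : 0 ≤ a ^ 2 / (2 * z) - a * t + z * t ^ 2 / 2 := by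
    rw [show a ^ 2 / (2 * z) - a * t + z * t ^ 2 / 2 = (z * t - a) ^ 2 / (2 * z) by
      field_simp; ring]
    positivity
  rw [norm_of_nonneg (by positivity)]
  calc exp (-z * cosh t) * cosh (ν * t) ≤ exp (-z * cosh t) * exp (|ν| * t) := by
        gcongr
        simpa [abs_mul, abs_of_pos ht] using cosh_le_exp_abs (ν * t)
    _ ≤ exp (a ^ 2 / (2 * z)) * exp (-1 * t) := by
        rw [← exp_add, ← exp_add, exp_le_exp]
        nlinarith [one_add_sq_div_two_le_cosh t]

theorem two_mul_cosh_sub_one_rpow_mul_sinh_lt_cosh {ν t : ℝ} (hν : 1 ≤ ν) (ht : 0 ≤ t) :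
    (2 * (cosh t - 1)) ^ (ν - 1) * sinh t < cosh (ν * t) := by
  have hcosh : 2 * (cosh t - 1) ≤ exp t := by
    rw [cosh_eq]
    linarith [exp_le_one_iff.2 (neg_nonpos.2 ht)]
  have hsinh : sinh t < exp t / 2 := by
    rw [sinh_eq]
    linarith [exp_pos (-t)]
  have hcosh₀ : 0 ≤ 2 * (cosh t - 1) := by linarith [one_le_cosh t]
  calc (2 * (cosh t - 1)) ^ (ν - 1) * sinh t ≤ exp t ^ (ν - 1) * sinh t := by gcongr
    _ < exp t ^ (ν - 1) * (exp t / 2) := by gcongr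
    _ = exp (ν * t) / 2 := by
        rw [← exp_mul, mul_div_assoc', ← exp_add]
        ring_nf
    _ < cosh (ν * t) := by
        rw [cosh_eq]
        linarith [exp_pos (-(ν * t))]

end Real

theorem besselK_gt_gamma_bound (ν z : ℝ) (hν : 1 ≤ ν) (hz : 0 < z) :
    besselK ν z > (Real.Gamma ν / 2) * Real.exp (-z) * (2 / z) ^ ν := by
  have hν₀ : 0 < ν := zero_lt_one.trans_le hν
  rw [gt_iff_lt, ← integral_exp_neg_mul_cosh_mul_rpow_mul_sinh hν₀ hz]
  refine setIntegral_lt_setIntegral_of_forall_lt measurableSet_Ioi (by simp) ?_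
    (integrableOn_exp_neg_mul_cosh_mul_cosh_mul ν hz) fun t ht => ?_
  · -- a non-integrable function would have integral `0`
    refine Integrable.of_integral_ne_zero ?_
    rw [integral_exp_neg_mul_cosh_mul_rpow_mul_sinh hν₀ hz]
    exact (by positivity : (0 : ℝ) < _).ne'
  · exact mul_lt_mul_of_pos_left
      (two_mul_cosh_sub_one_rpow_mul_sinh_lt_cosh hν ht.le) (exp_pos _)
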